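/- For j = 1, …, d let H_j be a separable real Hilbert space, ν_j a finite Borel measure on H_j with λ_j := ν_j(H_j), and let N_1, …, N_d be independent H_j-valued random variables such that the law of N_j equals the compound Poisson distribution e^{−θ_j·λ_j}·Σ_{n=0}^∞ (θ_jⁿ/n!)·ν_j^{*n} for a given θ = (θ_1, …, θ_d) ∈ ℝ_+^d. Let H := H_1 × ⋯ × H_d with inner product ⟨u, v⟩ = Σ_j ⟨u_j, v_j⟩, and let g : H → ℝ_+ be measurable and subadditive (g(x + y) ≤ g(x) + g(y)) with g(0) = 0. Then E[g(N_1, …, N_d)] ≤ |θ|·√d·Σ_{j=1}^d ∫_{H_j} g(η_j(x)) ν_j(dx), where |θ| is the Euclidean norm of θ and η_j : H_j → H is the canonical embedding (all other coordinates zero). -/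

import Mathlib

/-! Subadditivity splits `g (N₁, …, N_d)` into `∑ⱼ g (ηⱼ Nⱼ)`, so it suffices to show
`∫ F d(cpoisson ν θ) ≤ θ ∫ F dν` for every measurable subadditive `F ≥ 0` with `F 0 = 0`.
Subadditivity under convolution gives `∫ F dν^{*(n+1)} ≤ (n+1) λⁿ ∫ F dν`, and against the
Poisson weights these bounds sum to `e^{-θλ} ∑ₙ θⁿ⁺¹ λⁿ / n! · ∫ F dν = θ ∫ F dν`.
Finally `θⱼ ≤ |θ| ≤ |θ| √d`. -/

open MeasureTheory ProbabilityTheory Filter Set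
open scoped RealInnerProductSpace ENNReal NNReal

noncomputable section

/-- Convolution of two (finite Borel) measures on an additive group:
`(α ∗ β)(B) = ∫ β(B − x) α(dx)`, realised as the pushforward of the product measure
under addition. -/
def mconv {G : Type*} [MeasurableSpace G] [Add G] (μ ν : Measure G) : Measure G :=
  Measure.map (fun p : G × G => p.1 + p.2) (μ.prod ν)

/-- Convolution powers of a measure: `ν^{*0} = δ_0`, `ν^{*(n+1)} = ν ∗ ν^{*n}`. -/
def convPow {G : Type*} [MeasurableSpace G] [Add G] [Zero G] (ν : Measure G) : ℕ → Measure G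
  | 0 => Measure.dirac 0
  | n + 1 => mconv ν (convPow ν n)

/-- The compound Poisson distribution at time `t` generated by a finite measure `ν`:
`e^{−t·ν(G)}·Σ_{n≥0} (tⁿ/n!)·ν^{*n}`. -/
def cpoisson {G : Type*} [MeasurableSpace G] [Add G] [Zero G] (ν : Measure G) (t : ℝ) :
    Measure G :=
  ENNReal.ofReal (Real.exp (-(t * (ν Set.univ).toReal))) •
    Measure.sum fun n : ℕ => ENNReal.ofReal (t ^ n / n.factorial) • convPow ν n

/-- The exponential function on `ℝ≥0∞` (with `eexp ⊤ = ⊤`), given by the usual power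
series; it agrees with `Real.exp` on finite values. -/
def eexp (x : ℝ≥0∞) : ℝ≥0∞ := ∑' n : ℕ, x ^ n / (n.factorial : ℝ≥0∞)

section Convolution

variable {G : Type*} [MeasurableSpace G]

instance isFiniteMeasure_mconv [Add G] (μ ν : Measure G) [IsFiniteMeasure μ]
    [IsFiniteMeasure ν] : IsFiniteMeasure (mconv μ ν) := by
  unfold mconv
  infer_instance

instance isFiniteMeasure_convPow [Add G] [Zero G] (ν : Measure G) [IsFiniteMeasure ν] (n : ℕ) :
    IsFiniteMeasure (convPow ν n) := by
  induction n with
  | zero => rw [convPow]; infer_instance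
  | succ n ih => rw [convPow]; infer_instance

variable [AddCommMonoid G] [MeasurableAdd₂ G]

lemma mconv_apply_univ (μ ν : Measure G) [SFinite ν] :
    mconv μ ν univ = μ univ * ν univ := by
  rw [mconv, Measure.map_apply measurable_add MeasurableSet.univ, preimage_univ,
    ← univ_prod_univ, Measure.prod_prod]

lemma convPow_apply_univ (ν : Measure G) [IsFiniteMeasure ν] (n : ℕ) :
    convPow ν n univ = ν univ ^ n := by
  induction n with
  | zero => simp [convPow]
  | succ n ih => rw [convPow, mconv_apply_univ, ih, pow_succ']

lemma mconv_dirac_zero (μ : Measure G) [SFinite μ] : mconv μ (Measure.dirac 0) = μ := by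
  rw [mconv, Measure.prod_dirac, Measure.map_map measurable_add measurable_prodMk_right]
  simp [Function.comp_def]

lemma convPow_one (ν : Measure G) [SFinite ν] : convPow ν 1 = ν :=
  mconv_dirac_zero ν

lemma lintegral_mconv (μ ν : Measure G) [SFinite ν] {F : G → ℝ≥0∞} (hF : Measurable F) :
    ∫⁻ z, F z ∂(mconv μ ν) = ∫⁻ x, ∫⁻ y, F (x + y) ∂ν ∂μ := by
  rw [mconv, lintegral_map hF measurable_add]
  exact lintegral_prod _ (hF.comp measurable_add).aemeasurable

lemma lintegral_mconv_le_of_subadditive (μ ν : Measure G) [SFinite ν] {F : G → ℝ≥0∞}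
    (hF : Measurable F) (hFsub : ∀ x y, F (x + y) ≤ F x + F y) :
    ∫⁻ z, F z ∂(mconv μ ν) ≤ ν univ * ∫⁻ x, F x ∂μ + μ univ * ∫⁻ y, F y ∂ν :=
  calc ∫⁻ z, F z ∂(mconv μ ν)
      ≤ ∫⁻ x, ∫⁻ y, (F x + F y) ∂ν ∂μ := by
        rw [lintegral_mconv μ ν hF]
        exact lintegral_mono fun x => lintegral_mono fun y => hFsub x y
    _ = ∫⁻ x, (F x * ν univ + ∫⁻ y, F y ∂ν) ∂μ := by
        simp_rw [lintegral_add_left measurable_const, lintegral_const]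
    _ = ν univ * ∫⁻ x, F x ∂μ + μ univ * ∫⁻ y, F y ∂ν := by
        rw [lintegral_add_right _ measurable_const, lintegral_const, lintegral_mul_const _ hF]
        ring

lemma lintegral_convPow_succ_le_of_subadditive (ν : Measure G) [IsFiniteMeasure ν]
    {F : G → ℝ≥0∞} (hF : Measurable F) (hFsub : ∀ x y, F (x + y) ≤ F x + F y) (n : ℕ) :
    ∫⁻ z, F z ∂(convPow ν (n + 1)) ≤ (n + 1 : ℕ) * ν univ ^ n * ∫⁻ x, F x ∂ν := by
  induction n with
  | zero => simp [convPow_one]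
  | succ n ih =>
    calc ∫⁻ z, F z ∂(convPow ν (n + 2))
        ≤ convPow ν (n + 1) univ * ∫⁻ x, F x ∂ν + ν univ * ∫⁻ z, F z ∂(convPow ν (n + 1)) :=
          lintegral_mconv_le_of_subadditive ν _ hF hFsub
      _ ≤ ν univ ^ (n + 1) * ∫⁻ x, F x ∂ν +
            ν univ * ((n + 1 : ℕ) * ν univ ^ n * ∫⁻ x, F x ∂ν) := by
          rw [convPow_apply_univ]
          gcongr
      _ = (n + 2 : ℕ) * ν univ ^ (n + 1) * ∫⁻ x, F x ∂ν := by
          push_cast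
          ring

end Convolution

lemma ENNReal.tsum_ofReal_pow_div_factorial {x : ℝ} (hx : 0 ≤ x) :
    ∑' n : ℕ, ENNReal.ofReal (x ^ n / n.factorial) = ENNReal.ofReal (Real.exp x) := by
  rw [← ENNReal.ofReal_tsum_of_nonneg (fun n => by positivity)
    (Real.summable_pow_div_factorial x), Real.exp_eq_exp_ℝ, NormedSpace.exp_eq_tsum_div]

lemma ENNReal.ofReal_pow_succ_div_factorial_mul {t r : ℝ} (ht : 0 ≤ t) (hr : 0 ≤ r) (n : ℕ) :
    ENNReal.ofReal (t ^ (n + 1) / (n + 1).factorial) * ((n + 1 : ℕ) * ENNReal.ofReal r ^ n) =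
      ENNReal.ofReal t * ENNReal.ofReal ((t * r) ^ n / n.factorial) := by
  rw [← ENNReal.ofReal_natCast, ← ENNReal.ofReal_pow hr, ← ENNReal.ofReal_mul (by positivity),
    ← ENNReal.ofReal_mul (by positivity), ← ENNReal.ofReal_mul ht]
  congr 1
  rw [Nat.factorial_succ]
  push_cast
  field_simp
  ring

section CompoundPoisson

variable {G : Type*} [MeasurableSpace G]

lemma lintegral_cpoisson [Add G] [Zero G] (ν : Measure G) (t : ℝ) (F : G → ℝ≥0∞) :
    ∫⁻ z, F z ∂(cpoisson ν t) = ENNReal.ofReal (Real.exp (-(t * (ν univ).toReal))) *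
      ∑' n : ℕ, ENNReal.ofReal (t ^ n / n.factorial) * ∫⁻ z, F z ∂(convPow ν n) := by
  simp only [cpoisson, lintegral_smul_measure, lintegral_sum_measure, smul_eq_mul]

lemma lintegral_cpoisson_le_of_subadditive [AddCommMonoid G] [MeasurableAdd₂ G]
    (ν : Measure G) [IsFiniteMeasure ν] {t : ℝ} (ht : 0 ≤ t) {F : G → ℝ≥0∞}
    (hF : Measurable F) (hF0 : F 0 = 0) (hFsub : ∀ x y, F (x + y) ≤ F x + F y) :
    ∫⁻ z, F z ∂(cpoisson ν t) ≤ ENNReal.ofReal t * ∫⁻ x, F x ∂ν := by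
  set r := (ν univ).toReal
  set A := ∫⁻ x, F x ∂ν
  have hr : ν univ = ENNReal.ofReal r := (ENNReal.ofReal_toReal (measure_ne_top ν _)).symm
  have hterm (n : ℕ) : ENNReal.ofReal (t ^ (n + 1) / (n + 1).factorial) *
      ∫⁻ z, F z ∂(convPow ν (n + 1)) ≤
        ENNReal.ofReal t * ENNReal.ofReal ((t * r) ^ n / n.factorial) * A :=
    calc _ ≤ ENNReal.ofReal (t ^ (n + 1) / (n + 1).factorial) * ((n + 1 : ℕ) * ν univ ^ n * A) := by
          gcongr
          exact lintegral_convPow_succ_le_of_subadditive ν hF hFsub n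
      _ = _ := by
          rw [hr, ← mul_assoc, ENNReal.ofReal_pow_succ_div_factorial_mul ht ENNReal.toReal_nonneg]
  calc ∫⁻ z, F z ∂(cpoisson ν t)
      = ENNReal.ofReal (Real.exp (-(t * r))) * ∑' n : ℕ, ENNReal.ofReal (t ^ (n + 1) /
          (n + 1).factorial) * ∫⁻ z, F z ∂(convPow ν (n + 1)) := by
        rw [lintegral_cpoisson, tsum_eq_zero_add' ENNReal.summable]
        simp [r, convPow, lintegral_dirac' _ hF, hF0]
    _ ≤ ENNReal.ofReal (Real.exp (-(t * r))) *
          ∑' n : ℕ, ENNReal.ofReal t * ENNReal.ofReal ((t * r) ^ n / n.factorial) * A := by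
        gcongr _ * ?_
        exact ENNReal.tsum_le_tsum hterm
    _ = ENNReal.ofReal t * A *
          (ENNReal.ofReal (Real.exp (-(t * r))) * ENNReal.ofReal (Real.exp (t * r))) := by
        rw [ENNReal.tsum_mul_right, ENNReal.tsum_mul_left,
          ENNReal.tsum_ofReal_pow_div_factorial (mul_nonneg ht ENNReal.toReal_nonneg)]
        ring
    _ = ENNReal.ofReal t * A := by
        rw [← ENNReal.ofReal_mul (Real.exp_nonneg _), ← Real.exp_add, neg_add_cancel,
          Real.exp_zero, ENNReal.ofReal_one, mul_one]

end CompoundPoisson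

lemma PiLp.le_sum_single_of_subadditive {ι : Type*} [Fintype ι] [DecidableEq ι] {p : ℝ≥0∞}
    {β : ι → Type*} [∀ i, AddCommGroup (β i)] {M : Type*} [AddCommMonoid M] [Preorder M]
    [IsOrderedAddMonoid M] (F : PiLp p β → M) (hF0 : F 0 = 0)
    (hFsub : ∀ x y, F (x + y) ≤ F x + F y) (f : ∀ i, β i) :
    F (WithLp.toLp p f) ≤ ∑ i, F (PiLp.single p i (f i)) := by
  conv_lhs => rw [← Finset.univ_sum_single f, WithLp.toLp_sum]
  exact Finset.le_sum_of_subadditive F hF0.le hFsub _ _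

lemma lintegral_le_sum_lintegral_map_single_of_subadditive {ι : Type*} [Fintype ι]
    [DecidableEq ι] {p : ℝ≥0∞} {β : ι → Type*} [∀ i, AddCommGroup (β i)]
    [∀ i, MeasurableSpace (β i)] {Ω : Type*} [MeasurableSpace Ω] (P : Measure Ω)
    {F : PiLp p β → ℝ≥0∞} (hF0 : F 0 = 0) (hFsub : ∀ x y, F (x + y) ≤ F x + F y)
    (hF_single : ∀ i, Measurable fun x : β i => F (PiLp.single p i x))
    {N : ∀ i, Ω → β i} (hN : ∀ i, Measurable (N i)) :
    ∫⁻ ω, F (WithLp.toLp p fun i => N i ω) ∂P ≤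
      ∑ i, ∫⁻ x, F (PiLp.single p i x) ∂(P.map (N i)) :=
  calc ∫⁻ ω, F (WithLp.toLp p fun i => N i ω) ∂P
      ≤ ∫⁻ ω, ∑ i, F (PiLp.single p i (N i ω)) ∂P :=
        lintegral_mono fun ω => PiLp.le_sum_single_of_subadditive F hF0 hFsub _
    _ = ∑ i, ∫⁻ x, F (PiLp.single p i x) ∂(P.map (N i)) := by
        rw [lintegral_finsetSum (f := fun i ω => F (PiLp.single p i (N i ω))) _
          fun i _ => (hF_single i).comp (hN i)]
        simp_rw [lintegral_map (hF_single _) (hN _)]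

lemma le_sqrt_sum_sq_mul_sqrt_card {ι : Type*} [Fintype ι] (θ : ι → ℝ) (j : ι) :
    θ j ≤ √(∑ i, θ i ^ 2) * √(Fintype.card ι) := by
  have hθ : θ j ≤ √(∑ i, θ i ^ 2) :=
    Real.le_sqrt_of_sq_le (Finset.single_le_sum (fun i _ => sq_nonneg (θ i)) (Finset.mem_univ j))
  have hcard : 1 ≤ √(Fintype.card ι : ℝ) :=
    Real.one_le_sqrt.mpr (by exact_mod_cast Fintype.card_pos_iff.mpr ⟨j⟩)
  exact hθ.trans (le_mul_of_one_le_right (Real.sqrt_nonneg _) hcard)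

theorem compound_poisson_subadditive_moment_bound_general
    {d : ℕ} {H : Fin d → Type*} [∀ j, NormedAddCommGroup (H j)]
    [∀ j, SecondCountableTopology (H j)]
    [∀ j, MeasurableSpace (H j)] [∀ j, BorelSpace (H j)]
    [MeasurableSpace (PiLp 2 H)] [BorelSpace (PiLp 2 H)]
    {Ω : Type*} [MeasurableSpace Ω] (P : Measure Ω)
    (ν : ∀ j, Measure (H j)) [∀ j, IsFiniteMeasure (ν j)]
    (θ : Fin d → ℝ) (hθ : ∀ j, 0 ≤ θ j)
    (N : ∀ j, Ω → H j) (hNmeas : ∀ j, Measurable (N j))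
    (hNlaw : ∀ j, Measure.map (N j) P = cpoisson (ν j) (θ j))
    (g : PiLp 2 H → ℝ≥0) (hg : Measurable g)
    (hgsub : ∀ x y : PiLp 2 H, g (x + y) ≤ g x + g y)
    (hg0 : g 0 = 0) :
    ∫⁻ ω, (g ((WithLp.equiv 2 (∀ j, H j)).symm fun j => N j ω) : ℝ≥0∞) ∂P
      ≤ ENNReal.ofReal (Real.sqrt (∑ j, θ j ^ 2) * Real.sqrt d) *
          ∑ j, ∫⁻ x, (g ((WithLp.equiv 2 (∀ j, H j)).symm (Pi.single j x)) : ℝ≥0∞) ∂(ν j) := by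
  set F : PiLp 2 H → ℝ≥0∞ := fun x => g x
  have hF0 : F 0 = 0 := by simp [F, hg0]
  have hFsub : ∀ x y, F (x + y) ≤ F x + F y := fun x y => by
    simpa [F] using ENNReal.coe_le_coe.mpr (hgsub x y)
  have hF_single : ∀ j, Measurable fun x : H j => F (PiLp.single 2 j x) := fun j =>
    hg.coe_nnreal_ennreal.comp ((PiLp.continuous_toLp 2 H).comp (continuous_single j)).measurable
  calc ∫⁻ ω, F (WithLp.toLp 2 fun j => N j ω) ∂P
      ≤ ∑ j, ∫⁻ x, F (PiLp.single 2 j x) ∂(cpoisson (ν j) (θ j)) := by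
        simpa only [hNlaw] using
          lintegral_le_sum_lintegral_map_single_of_subadditive P hF0 hFsub hF_single hNmeas
    _ ≤ ∑ j, ENNReal.ofReal (θ j) * ∫⁻ x, F (PiLp.single 2 j x) ∂(ν j) := by
        gcongr with j
        refine lintegral_cpoisson_le_of_subadditive (ν j) (hθ j) (hF_single j)
          (by simpa [PiLp.single] using hF0) fun x y => ?_
        simpa [PiLp.single_add] using hFsub _ _
    _ ≤ ENNReal.ofReal (√(∑ j, θ j ^ 2) * √d) *
          ∑ j, ∫⁻ x, F (PiLp.single 2 j x) ∂(ν j) := by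
        rw [Finset.mul_sum]
        gcongr with j
        simpa using le_sqrt_sum_sq_mul_sqrt_card θ j

/-- If `N_1, …, N_d` are independent compound Poisson distributed random
variables with jump measures `ν_j` at times `θ_j ≥ 0`, and `g ≥ 0` is subadditive with
`g(0) = 0`, then `E[g(N_1, …, N_d)] ≤ |θ|·√d·Σ_j ∫ g(η_j(x)) ν_j(dx)`. -/
theorem compound_poisson_subadditive_moment_bound
    {d : ℕ} {H : Fin d → Type*} [∀ j, NormedAddCommGroup (H j)]
    [∀ j, InnerProductSpace ℝ (H j)] [∀ j, CompleteSpace (H j)]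
    [∀ j, SecondCountableTopology (H j)]
    [∀ j, MeasurableSpace (H j)] [∀ j, BorelSpace (H j)]
    [MeasurableSpace (PiLp 2 H)] [BorelSpace (PiLp 2 H)]
    {Ω : Type*} [MeasurableSpace Ω] (P : Measure Ω) [IsProbabilityMeasure P]
    (ν : ∀ j, Measure (H j)) [∀ j, IsFiniteMeasure (ν j)]
    (θ : Fin d → ℝ) (hθ : ∀ j, 0 ≤ θ j)
    (N : ∀ j, Ω → H j) (hNmeas : ∀ j, Measurable (N j))
    (hNindep : iIndepFun N P)
    (hNlaw : ∀ j, Measure.map (N j) P = cpoisson (ν j) (θ j))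
    (g : PiLp 2 H → ℝ≥0) (hg : Measurable g)
    (hgsub : ∀ x y : PiLp 2 H, g (x + y) ≤ g x + g y)
    (hg0 : g 0 = 0) :
    ∫⁻ ω, (g ((WithLp.equiv 2 (∀ j, H j)).symm fun j => N j ω) : ℝ≥0∞) ∂P
      ≤ ENNReal.ofReal (Real.sqrt (∑ j, θ j ^ 2) * Real.sqrt d) *
          ∑ j, ∫⁻ x, (g ((WithLp.equiv 2 (∀ j, H j)).symm (Pi.single j x)) : ℝ≥0∞) ∂(ν j) :=
  compound_poisson_subadditive_moment_bound_general P ν θ hθ N hNmeas hNlaw g hg hgsub hg0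

end
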